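/- (Order–degree–height surface for rational-case creative telescoping; operator core.) Let u ∈ C[x,y] be nonzero. For i = 1, …, s let V_i = Σ_{j=0}^{ρ_i} (v_{i,j}·)∘S_x^j with v_{i,j} ∈ C[x,y], deg_x v_{i,j} ≤ θ_i and deg_y v_{i,j} ≤ τ_i, and let a'_1, …, a'_s be positive integers. Let r, d, h ∈ ℕ be such that d ≥ deg_x u, h ≥ deg_y u, a'_i ≤ r + ρ_i + 1 for all i, and (r+1)(d+1−deg_x u)(h+1−deg_y u) − Σ_{i=1}^{s} a'_i·θ_i·τ_i − (d+1−deg_x u)·Σ_{i=1}^{s} a'_i·τ_i − (h+1−deg_y u)·Σ_{i=1}^{s} a'_i·θ_i − (d+1−deg_x u)(h+1−deg_y u)·Σ_{i=1}^{s} a'_i > 0. Then there exist polynomials c_0, …, c_r ∈ C[x,y], not all zero, with deg_x c_t ≤ d − deg_x u and deg_y c_t ≤ h − deg_y u, and for each i polynomials w_{i,0}, …, w_{i,r+ρ_i−a'_i} ∈ C[x,y] with deg_x w_{i,j} ≤ d − deg_x u + θ_i and deg_y w_{i,j} ≤ h − deg_y u + τ_i, such that for every i the identity (Σ_{t=0}^{r}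 (c_t·)∘S_x^t) ∘ V_i = (Σ_{j=0}^{r+ρ_i−a'_i} (w_{i,j}·)∘S_x^j) ∘ (S_x^{a'_i} − id) holds as C-linear endomorphisms of C[x,y]. -/

import Mathlib

open MvPolynomial

/-- The shift `S_x` on `C[x,y]`: the `C`-algebra endomorphism (in fact automorphism)
with `x ↦ x + 1` and `y ↦ y`. -/
noncomputable def shiftX (C : Type*) [CommRing C] :
    MvPolynomial (Fin 2) C →ₐ[C] MvPolynomial (Fin 2) C :=
  aeval ![X 0 + 1, X 1]

/-! Writing `P = Σ_k p_k S_x^k` for the product `(Σ_t c_t S_x^t) ∘ V`, the operator `P` is a right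
multiple of `S_x^a − 1` as soon as, for every residue `m` modulo `a`, the coefficients `p_k` with
`k ≡ m` sum to zero: then `P = Σ_k p_k (S_x^k − S_x^(k mod a))`, and each bracket is a geometric
series times `S_x^a − 1`. These residue sums depend linearly on the `c_t`, and since `S_x` preserves
degree and height they lie in a space of dimension `(d + 1 − deg_x u + θ)(h + 1 − deg_y u + τ)`.
The inequality says that there are more unknown coefficients than linear conditions, so a nonzero
solution exists. -/

open Finset

theorem degreeOf_aeval_le {σ R : Type*} [CommSemiring R] [DecidableEq σ] (n : σ)
    {g : σ → MvPolynomial σ R} (hg : ∀ i, degreeOf n (g i) ≤ if i = n then 1 else 0)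
    (p : MvPolynomial σ R) : degreeOf n (aeval g p) ≤ degreeOf n p := by
  rw [aeval_def, eval₂_eq]
  refine (degreeOf_sum_le _ _ _).trans (Finset.sup_le fun m hm => ?_)
  calc degreeOf n (algebraMap R _ (coeff m p) * ∏ i ∈ m.support, g i ^ m i)
      ≤ ∑ i ∈ m.support, m i * degreeOf n (g i) := by
        rw [← C_eq_algebraMap]
        exact (degreeOf_C_mul_le _ _ _).trans ((degreeOf_prod_le _ _ _).trans
          (Finset.sum_le_sum fun i _ => degreeOf_pow_le _ _ _))
    _ ≤ ∑ i ∈ m.support, if i = n then m i else 0 :=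
        Finset.sum_le_sum fun i _ => (Nat.mul_le_mul_left _ (hg i)).trans (by split_ifs <;> simp)
    _ ≤ m n := by rw [Finset.sum_ite_eq']; split_ifs <;> simp
    _ ≤ degreeOf n p := monomial_le_degreeOf n hm

noncomputable def degreeBox (C : Type*) [CommRing C] (A B : ℕ) :
    Submodule C (MvPolynomial (Fin 2) C) :=
  restrictSupport C ↑(Iic (Finsupp.single 0 A + Finsupp.single 1 B : Fin 2 →₀ ℕ))

section DegreeBox

variable {C : Type*} [CommRing C]

theorem mem_degreeBox {A B : ℕ} {p : MvPolynomial (Fin 2) C} :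
    p ∈ degreeBox C A B ↔ degreeOf 0 p ≤ A ∧ degreeOf 1 p ≤ B := by
  simp only [degreeBox, mem_restrictSupport_iff, degreeOf_le_iff, ← forall₂_and, Set.subset_def,
    Finset.mem_coe, Finset.mem_Iic, Finsupp.le_def, Fin.forall_fin_two]
  simp

instance (A B : ℕ) : Module.Finite C (degreeBox C A B) :=
  Module.Finite.of_basis (basisRestrictSupport C _)

theorem finrank_degreeBox [Nontrivial C] (A B : ℕ) :
    Module.finrank C (degreeBox C A B) = (A + 1) * (B + 1) := by
  rw [degreeBox, Module.finrank_eq_card_basis (basisRestrictSupport C _)]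
  simp only [Finset.coe_sort_coe, Fintype.card_coe, Finsupp.card_Iic]
  rw [Finset.prod_subset (subset_univ _) fun i _ hi => by simp [Finsupp.notMem_support_iff.mp hi]]
  simp

theorem mul_mem_degreeBox {A B A' B' : ℕ} {p q : MvPolynomial (Fin 2) C}
    (hp : p ∈ degreeBox C A B) (hq : q ∈ degreeBox C A' B') :
    p * q ∈ degreeBox C (A + A') (B + B') := by
  rw [mem_degreeBox] at *
  exact ⟨(degreeOf_mul_le _ _ _).trans (add_le_add hp.1 hq.1),
    (degreeOf_mul_le _ _ _).trans (add_le_add hp.2 hq.2)⟩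

theorem degreeOf_shiftX_le [Nontrivial C] (n : Fin 2) (p : MvPolynomial (Fin 2) C) :
    degreeOf n (shiftX C p) ≤ degreeOf n p := by
  refine degreeOf_aeval_le n (fun i => ?_) p
  fin_cases i <;> fin_cases n <;> simp [degreeOf_X, (degreeOf_add_le _ _ _).trans]

theorem shiftX_pow_apply_mem_degreeBox [Nontrivial C] {A B : ℕ} (t : ℕ)
    {p : MvPolynomial (Fin 2) C} (hp : p ∈ degreeBox C A B) :
    ((shiftX C).toLinearMap ^ t) p ∈ degreeBox C A B := by
  induction t with
  | zero => simpa using hp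
  | succ t ih =>
    rw [pow_succ', Module.End.mul_apply, mem_degreeBox] at *
    exact ⟨(degreeOf_shiftX_le 0 _).trans ih.1, (degreeOf_shiftX_le 1 _).trans ih.2⟩

end DegreeBox

section ShiftOperator

variable {R A : Type*} [CommSemiring R] [Semiring A] [Algebra R A] (f : A →ₐ[R] A)

noncomputable def shiftOperator (c : ℕ → A) (N : ℕ) : Module.End R A :=
  ∑ t ∈ range N, LinearMap.mulLeft R (c t) * f.toLinearMap ^ t

/-- The `k`-th coefficient of `shiftOperator f c (n + 1) * shiftOperator f v (ρ + 1)`, as a linear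
function of `c`. -/
noncomputable def productCoeff (v : ℕ → A) (n ρ k : ℕ) : (ℕ → A) →ₗ[R] A :=
  ∑ t ∈ range (n + 1), ∑ j ∈ range (ρ + 1),
    if t + j = k then LinearMap.mulRight R ((f.toLinearMap ^ t) (v j)) ∘ₗ LinearMap.proj t else 0

@[simp]
theorem productCoeff_apply (v c : ℕ → A) (n ρ k : ℕ) :
    productCoeff f v n ρ k c = ∑ t ∈ range (n + 1), ∑ j ∈ range (ρ + 1),
      if t + j = k then c t * (f.toLinearMap ^ t) (v j) else 0 := by
  simp only [productCoeff, LinearMap.sum_apply]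
  refine sum_congr rfl fun t _ => sum_congr rfl fun j _ => ?_
  split_ifs <;> rfl

theorem toLinearMap_pow_mul_mulLeft (t : ℕ) (a : A) :
    f.toLinearMap ^ t * LinearMap.mulLeft R a =
      LinearMap.mulLeft R ((f.toLinearMap ^ t) a) * f.toLinearMap ^ t := by
  rw [← AlgHom.toEnd_apply, ← map_pow]
  ext x
  simp

theorem shiftOperator_mul_shiftOperator (c v : ℕ → A) (n ρ : ℕ) :
    shiftOperator f c (n + 1) * shiftOperator f v (ρ + 1) =
      shiftOperator f (fun k => productCoeff f v n ρ k c) (n + ρ + 1) := by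
  have hterm : ∀ t j, LinearMap.mulLeft R (c t) * f.toLinearMap ^ t *
      (LinearMap.mulLeft R (v j) * f.toLinearMap ^ j) =
        LinearMap.mulLeft R (c t * (f.toLinearMap ^ t) (v j)) * f.toLinearMap ^ (t + j) := by
    intro t j
    rw [mul_assoc, ← mul_assoc (f.toLinearMap ^ t), toLinearMap_pow_mul_mulLeft,
      LinearMap.mulLeft_mul, pow_add]
    simp only [Module.End.mul_eq_comp, LinearMap.comp_assoc]
  simp only [shiftOperator, productCoeff_apply, Finset.sum_mul_sum, hterm]
  change _ = ∑ k ∈ _, Algebra.lmul R A _ * _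
  simp only [map_sum, apply_ite, map_zero, Finset.sum_mul, ite_mul, zero_mul]
  symm
  rw [Finset.sum_comm]
  refine sum_congr rfl fun t ht => ?_
  rw [Finset.sum_comm]
  refine sum_congr rfl fun j hj => ?_
  rw [Finset.sum_ite_eq, if_pos]
  · rfl
  simp only [mem_range] at *
  omega

end ShiftOperator

section RightDivision

/-- The `j`-th coefficient of the right quotient by `x ^ a - 1` of `∑ k < N, q k * x ^ k`. -/
def divCoeff {M : Type*} [AddCommMonoid M] (a N : ℕ) (q : ℕ → M) (j : ℕ) : M :=
  ∑ k ∈ range N, ∑ l ∈ range (k / a), if k % a + a * l = j then q k else 0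

theorem divCoeff_mem {M S : Type*} [AddCommMonoid M] [SetLike S M] [AddSubmonoidClass S M]
    {p : S} {q : ℕ → M} (hq : ∀ k, q k ∈ p) (a N j : ℕ) : divCoeff a N q j ∈ p :=
  sum_mem fun k _ => sum_mem fun _ _ => by split_ifs <;> simp [hq k, zero_mem]

theorem map_divCoeff {M M' F : Type*} [AddCommMonoid M] [AddCommMonoid M'] [FunLike F M M']
    [AddMonoidHomClass F M M'] (φ : F) (a N : ℕ) (q : ℕ → M) (j : ℕ) :
    φ (divCoeff a N q j) = divCoeff a N (φ ∘ q) j := by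
  simp [divCoeff, map_sum, apply_ite]

theorem pow_sub_pow_mod_eq_sum_mul {A : Type*} [Ring A] (x : A) (a k : ℕ) :
    x ^ k - x ^ (k % a) = (∑ l ∈ range (k / a), x ^ (k % a + a * l)) * (x ^ a - 1) := by
  simp_rw [pow_add, ← Finset.mul_sum, pow_mul, mul_assoc, geom_sum_mul, mul_sub, mul_one,
    ← pow_mul, ← pow_add, Nat.mod_add_div]

theorem sum_mul_pow_eq_divCoeff_mul {A : Type*} [Ring A] (x : A) (q : ℕ → A) {a N : ℕ}
    (ha : 0 < a) (hq : ∀ m < a, ∑ k ∈ (range N).filter (· % a = m), q k = 0) :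
    ∑ k ∈ range N, q k * x ^ k =
      (∑ j ∈ range (N - a), divCoeff a N q j * x ^ j) * (x ^ a - 1) := by
  have hres : ∑ k ∈ range N, q k * x ^ (k % a) = 0 := by
    rw [← Finset.sum_fiberwise_of_maps_to (g := (· % a)) (t := range a)
      fun k _ => mem_range.mpr (Nat.mod_lt k ha)]
    refine Finset.sum_eq_zero fun m hm => ?_
    rw [Finset.sum_congr rfl fun k hk => by rw [(mem_filter.mp hk).2], ← Finset.sum_mul,
      hq m (mem_range.mp hm), zero_mul]
  calc ∑ k ∈ range N, q k * x ^ k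
      = ∑ k ∈ range N, q k * (x ^ k - x ^ (k % a)) := by
        simp only [mul_sub, Finset.sum_sub_distrib, hres, sub_zero]
    _ = (∑ k ∈ range N, ∑ l ∈ range (k / a), q k * x ^ (k % a + a * l)) * (x ^ a - 1) := by
        simp only [pow_sub_pow_mod_eq_sum_mul, Finset.sum_mul, Finset.mul_sum, mul_assoc]
    _ = _ := by
        congr 1
        simp only [divCoeff, Finset.sum_mul, ite_mul, zero_mul]
        rw [Finset.sum_comm]
        refine sum_congr rfl fun k hk => ?_
        rw [Finset.sum_comm]
        refine sum_congr rfl fun l hl => ?_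
        rw [Finset.sum_ite_eq, if_pos]
        have := Nat.mod_add_div k a
        have := Nat.mul_le_mul_left a (mem_range.mp hl)
        simp only [mem_range, Nat.mul_succ] at *
        omega

theorem shiftOperator_eq_mul_pow_sub_one {R A : Type*} [CommRing R] [Ring A] [Algebra R A]
    (f : A →ₐ[R] A) (p : ℕ → A) {a N : ℕ} (ha : 0 < a)
    (hp : ∀ m < a, ∑ k ∈ (range N).filter (· % a = m), p k = 0) :
    shiftOperator f p N = shiftOperator f (divCoeff a N p) (N - a) * (f.toLinearMap ^ a - 1) := by
  have hlmul : ∀ b, LinearMap.mulLeft R b = Algebra.lmul R A b := fun _ => rfl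
  simp only [shiftOperator, hlmul, map_divCoeff]
  exact sum_mul_pow_eq_divCoeff_mul _ _ ha fun m hm => by rw [← map_sum, hp m hm, map_zero]

end RightDivision

theorem exists_ne_zero_forall_eq_zero_of_sum_finrank_lt {K V W ι : Type*} [Field K]
    [AddCommGroup V] [Module K V] [FiniteDimensional K V] [AddCommGroup W] [Module K W]
    [Fintype ι] (f : ι → V →ₗ[K] W) (U : ι → Submodule K W) [∀ i, FiniteDimensional K (U i)]
    (hfU : ∀ i v, f i v ∈ U i) (hlt : ∑ i, Module.finrank K (U i) < Module.finrank K V) :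
    ∃ v ≠ 0, ∀ i, f i v = 0 := by
  let F : V →ₗ[K] ∀ i, U i := LinearMap.pi fun i => (f i).codRestrict (U i) (hfU i)
  obtain ⟨v, hv, hv0⟩ := (Submodule.ne_bot_iff _).mp
    (LinearMap.ker_ne_bot_of_finrank_lt (f := F) (by rwa [Module.finrank_pi_fintype]))
  exact ⟨v, hv0, fun i => congrArg Subtype.val (congrFun (LinearMap.mem_ker.mp hv) i)⟩

theorem productCoeff_shiftX_mem_degreeBox {C : Type*} [CommRing C] [Nontrivial C]
    {A B θ τ : ℕ} {v c : ℕ → MvPolynomial (Fin 2) C} {ρ : ℕ}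
    (hv : ∀ j ≤ ρ, v j ∈ degreeBox C θ τ) (hc : ∀ t, c t ∈ degreeBox C A B) (n k : ℕ) :
    productCoeff (shiftX C) v n ρ k c ∈ degreeBox C (A + θ) (B + τ) := by
  rw [productCoeff_apply]
  refine sum_mem fun t _ => sum_mem fun j hj => ?_
  split_ifs
  · exact mul_mem_degreeBox (hc t)
      (shiftX_pow_apply_mem_degreeBox t (hv j (Nat.lt_succ_iff.mp (mem_range.mp hj))))
  · exact zero_mem _

theorem exists_coeffs_residue_sums_eq_zero {C : Type*} [Field C] {s : ℕ}
    (ρ θ τ a : Fin s → ℕ) (v : Fin s → ℕ → MvPolynomial (Fin 2) C)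
    (hv : ∀ i, ∀ j ≤ ρ i, v i j ∈ degreeBox C (θ i) (τ i)) (r A B : ℕ)
    (hlt : ∑ i, a i * ((A + θ i + 1) * (B + τ i + 1)) < (r + 1) * ((A + 1) * (B + 1))) :
    ∃ c : ℕ → MvPolynomial (Fin 2) C, (∃ t ≤ r, c t ≠ 0) ∧ (∀ t, c t ∈ degreeBox C A B) ∧
      ∀ i, ∀ m < a i, ∑ k ∈ (range (r + ρ i + 1)).filter (· % a i = m),
        productCoeff (shiftX C) (v i) r (ρ i) k c = 0 := by
  let extendByZero : (Fin (r + 1) → degreeBox C A B) →ₗ[C] ℕ → MvPolynomial (Fin 2) C :=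
    LinearMap.pi fun t =>
      if ht : t < r + 1 then (degreeBox C A B).subtype ∘ₗ LinearMap.proj ⟨t, ht⟩ else 0
  have hext : ∀ e t, extendByZero e t ∈ degreeBox C A B := by
    intro e t
    simp only [extendByZero, LinearMap.pi_apply]
    split_ifs <;> simp
  obtain ⟨e, he, hker⟩ := exists_ne_zero_forall_eq_zero_of_sum_finrank_lt
    (fun x : (i : Fin s) × Fin (a i) =>
      (∑ k ∈ (range (r + ρ x.1 + 1)).filter (· % a x.1 = x.2),
        productCoeff (shiftX C) (v x.1) r (ρ x.1) k) ∘ₗ extendByZero)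
    (fun x => degreeBox C (A + θ x.1) (B + τ x.1))
    (fun x e => by
      simpa using sum_mem fun k _ => productCoeff_shiftX_mem_degreeBox (hv x.1) (hext e) r k)
    (by simpa [finrank_degreeBox, Fintype.sum_sigma, Module.finrank_pi_fintype] using hlt)
  obtain ⟨t, ht⟩ := Function.ne_iff.mp he
  exact ⟨extendByZero e, ⟨t, Nat.lt_succ_iff.mp t.isLt, by
    simp only [extendByZero, LinearMap.pi_apply, dif_pos t.isLt, LinearMap.comp_apply,
      Submodule.subtype_apply, LinearMap.proj_apply, Fin.eta]
    exact fun h0 => ht (Subtype.ext h0)⟩, hext e,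
    fun i m hm => by simpa using hker ⟨i, m, hm⟩⟩

theorem sum_mul_mul_lt_of_sub_pos {s : ℕ} (a θ τ : Fin s → ℕ) (r A B : ℕ)
    (h : ((r : ℤ) + 1) * ((A : ℤ) + 1) * ((B : ℤ) + 1)
        - (∑ i, (a i : ℤ) * (θ i : ℤ) * (τ i : ℤ))
        - ((A : ℤ) + 1) * (∑ i, (a i : ℤ) * (τ i : ℤ))
        - ((B : ℤ) + 1) * (∑ i, (a i : ℤ) * (θ i : ℤ))
        - ((A : ℤ) + 1) * ((B : ℤ) + 1) * (∑ i, (a i : ℤ)) > 0) :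
    ∑ i, a i * ((A + θ i + 1) * (B + τ i + 1)) < (r + 1) * ((A + 1) * (B + 1)) := by
  have hsum : ∑ i, (a i : ℤ) * ((A + θ i + 1) * (B + τ i + 1)) =
      (∑ i, (a i : ℤ) * θ i * τ i) + (A + 1) * (∑ i, (a i : ℤ) * τ i)
        + (B + 1) * (∑ i, (a i : ℤ) * θ i) + (A + 1) * (B + 1) * (∑ i, (a i : ℤ)) := by
    simp only [Finset.mul_sum, ← Finset.sum_add_distrib]
    exact sum_congr rfl fun i _ => by ring
  zify
  linarith

theorem rational_telescoping_order_degree_height_general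
    (C : Type*) [Field C] (s : ℕ)
    (u : MvPolynomial (Fin 2) C)
    (ρ θ τ : Fin s → ℕ)
    (vv : Fin s → ℕ → MvPolynomial (Fin 2) C)
    (hvd : ∀ i, ∀ j ≤ ρ i, degreeOf 0 (vv i j) ≤ θ i)
    (hvh : ∀ i, ∀ j ≤ ρ i, degreeOf 1 (vv i j) ≤ τ i)
    (a' : Fin s → ℕ) (ha' : ∀ i, 0 < a' i)
    (r d h : ℕ)
    (hdu : degreeOf 0 u ≤ d) (hhu : degreeOf 1 u ≤ h)
    (hineq :
      ((r : ℤ) + 1) * ((d : ℤ) + 1 - degreeOf 0 u) * ((h : ℤ) + 1 - degreeOf 1 u)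
        - (∑ i, (a' i : ℤ) * (θ i : ℤ) * (τ i : ℤ))
        - ((d : ℤ) + 1 - degreeOf 0 u) * (∑ i, (a' i : ℤ) * (τ i : ℤ))
        - ((h : ℤ) + 1 - degreeOf 1 u) * (∑ i, (a' i : ℤ) * (θ i : ℤ))
        - ((d : ℤ) + 1 - degreeOf 0 u) * ((h : ℤ) + 1 - degreeOf 1 u) * (∑ i, (a' i : ℤ))
        > 0) :
    ∃ (c : ℕ → MvPolynomial (Fin 2) C) (w : Fin s → ℕ → MvPolynomial (Fin 2) C),
      (¬ ∀ t ≤ r, c t = 0) ∧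
      (∀ t ≤ r, degreeOf 0 (c t) ≤ d - degreeOf 0 u ∧ degreeOf 1 (c t) ≤ h - degreeOf 1 u) ∧
      (∀ i, ∀ j ≤ r + ρ i - a' i,
        degreeOf 0 (w i j) ≤ d - degreeOf 0 u + θ i ∧
        degreeOf 1 (w i j) ≤ h - degreeOf 1 u + τ i) ∧
      (∀ i,
        (∑ t ∈ Finset.range (r + 1),
            (LinearMap.mulLeft C (c t)) ∘ₗ
              (((shiftX C).toLinearMap :
                  Module.End C (MvPolynomial (Fin 2) C)) ^ t)) ∘ₗ
          (∑ j ∈ Finset.range (ρ i + 1),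
            (LinearMap.mulLeft C (vv i j)) ∘ₗ
              (((shiftX C).toLinearMap :
                  Module.End C (MvPolynomial (Fin 2) C)) ^ j)) =
        (∑ j ∈ Finset.range (r + ρ i + 1 - a' i),
            (LinearMap.mulLeft C (w i j)) ∘ₗ
              (((shiftX C).toLinearMap :
                  Module.End C (MvPolynomial (Fin 2) C)) ^ j)) ∘ₗ
          ((((shiftX C).toLinearMap :
              Module.End C (MvPolynomial (Fin 2) C)) ^ (a' i)) - 1)) := by
  have hA : (d : ℤ) + 1 - degreeOf 0 u = ((d - degreeOf 0 u : ℕ) : ℤ) + 1 := by omega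
  have hB : (h : ℤ) + 1 - degreeOf 1 u = ((h - degreeOf 1 u : ℕ) : ℤ) + 1 := by omega
  rw [hA, hB] at hineq
  have hv i j (hj : j ≤ ρ i) : vv i j ∈ degreeBox C (θ i) (τ i) :=
    mem_degreeBox.mpr ⟨hvd i j hj, hvh i j hj⟩
  obtain ⟨c, ⟨t, ht, hct⟩, hc, hres⟩ := exists_coeffs_residue_sums_eq_zero ρ θ τ a' vv hv r _ _
    (sum_mul_mul_lt_of_sub_pos a' θ τ r _ _ hineq)
  let p i k := productCoeff (shiftX C) (vv i) r (ρ i) k c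
  refine ⟨c, fun i => divCoeff (a' i) (r + ρ i + 1) (p i), fun h0 => hct (h0 t ht),
    fun t _ => mem_degreeBox.mp (hc t), fun i j _ => mem_degreeBox.mp ?_, fun i => ?_⟩
  · exact divCoeff_mem (fun k => productCoeff_shiftX_mem_degreeBox (hv i) hc r k) _ _ _
  · change shiftOperator (shiftX C) c (r + 1) * shiftOperator (shiftX C) (vv i) (ρ i + 1) =
      shiftOperator (shiftX C) _ _ * _
    rw [shiftOperator_mul_shiftOperator]
    exact shiftOperator_eq_mul_pow_sub_one _ (p i) (ha' i) (hres i)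

/-- Order–degree–height surface for rational-case creative telescoping (operator core,
Theorem 3 of the paper): given `u ∈ C[x,y] \ {0}`, shift operators
`V_i = Σ_j (v_{i,j}·)∘S_x^j` of order `ρ_i`, degree `≤ θ_i`, height `≤ τ_i`, and positive
integers `a'_i`, if `(r,d,h)` satisfies the stated inequality then there is a nonzero
operator `Σ_t (c_t·)∘S_x^t` with `deg_x c_t ≤ d − deg_x u`, `deg_y c_t ≤ h − deg_y u` such
that for each `i` it satisfies `(Σ_t (c_t·)∘S_x^t) ∘ V_i = R_i ∘ (S_x^{a'_i} − id)` for an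
operator `R_i` of order `r + ρ_i − a'_i`, degree `≤ d − deg_x u + θ_i`, and height
`≤ h − deg_y u + τ_i`. -/
theorem rational_telescoping_order_degree_height
    (C : Type*) [Field C] [CharZero C] (s : ℕ)
    (u : MvPolynomial (Fin 2) C) (hu : u ≠ 0)
    (ρ θ τ : Fin s → ℕ)
    (vv : Fin s → ℕ → MvPolynomial (Fin 2) C)
    (hvd : ∀ i, ∀ j ≤ ρ i, degreeOf 0 (vv i j) ≤ θ i)
    (hvh : ∀ i, ∀ j ≤ ρ i, degreeOf 1 (vv i j) ≤ τ i)
    (a' : Fin s → ℕ) (ha' : ∀ i, 0 < a' i)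
    (r d h : ℕ)
    (hdu : degreeOf 0 u ≤ d) (hhu : degreeOf 1 u ≤ h)
    (ha'le : ∀ i, a' i ≤ r + ρ i + 1)
    (hineq :
      ((r : ℤ) + 1) * ((d : ℤ) + 1 - degreeOf 0 u) * ((h : ℤ) + 1 - degreeOf 1 u)
        - (∑ i, (a' i : ℤ) * (θ i : ℤ) * (τ i : ℤ))
        - ((d : ℤ) + 1 - degreeOf 0 u) * (∑ i, (a' i : ℤ) * (τ i : ℤ))
        - ((h : ℤ) + 1 - degreeOf 1 u) * (∑ i, (a' i : ℤ) * (θ i : ℤ))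
        - ((d : ℤ) + 1 - degreeOf 0 u) * ((h : ℤ) + 1 - degreeOf 1 u) * (∑ i, (a' i : ℤ))
        > 0) :
    ∃ (c : ℕ → MvPolynomial (Fin 2) C) (w : Fin s → ℕ → MvPolynomial (Fin 2) C),
      (¬ ∀ t ≤ r, c t = 0) ∧
      (∀ t ≤ r, degreeOf 0 (c t) ≤ d - degreeOf 0 u ∧ degreeOf 1 (c t) ≤ h - degreeOf 1 u) ∧
      (∀ i, ∀ j ≤ r + ρ i - a' i,
        degreeOf 0 (w i j) ≤ d - degreeOf 0 u + θ i ∧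
        degreeOf 1 (w i j) ≤ h - degreeOf 1 u + τ i) ∧
      (∀ i,
        (∑ t ∈ Finset.range (r + 1),
            (LinearMap.mulLeft C (c t)) ∘ₗ
              (((shiftX C).toLinearMap :
                  Module.End C (MvPolynomial (Fin 2) C)) ^ t)) ∘ₗ
          (∑ j ∈ Finset.range (ρ i + 1),
            (LinearMap.mulLeft C (vv i j)) ∘ₗ
              (((shiftX C).toLinearMap :
                  Module.End C (MvPolynomial (Fin 2) C)) ^ j)) =
        (∑ j ∈ Finset.range (r + ρ i + 1 - a' i),
            (LinearMap.mulLeft C (w i j)) ∘ₗ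
              (((shiftX C).toLinearMap :
                  Module.End C (MvPolynomial (Fin 2) C)) ^ j)) ∘ₗ
          ((((shiftX C).toLinearMap :
              Module.End C (MvPolynomial (Fin 2) C)) ^ (a' i)) - 1)) :=
  rational_telescoping_order_degree_height_general C s u ρ θ τ vv hvd hvh a' ha' r d h hdu hhu hineq
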